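/- Let Γ be a positive definite q×q matrix, Δ ∈ ℝ^q, c ∈ ℝ, u > 0, and set D = Γ + Δ Δ^⊤ and λ = D^{-1/2} Δ / √(1 − Δ^⊤ D^{-1} Δ). Then for every b ∈ ℝ^q, ∫_c^∞ 2 φ_1(t; c, u^{-1}) φ_q(b; Δt, u^{-1}Γ) dt = 2 φ_q(b; cΔ, u^{-1}D) Φ(u^{1/2} λ^⊤ D^{-1/2}(b − cΔ)). (That is, if T | U=u follows the normal distribution N(c, u^{-1}) truncated to (c, ∞) and b | T=t, U=u ~ N_q(Δt, u^{-1}Γ), then b | U=u follows the skew-normal distribution SN_q(cΔ, u^{-1}D, λ).) -/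

import Mathlib

open MeasureTheory Matrix Real

/-- Multivariate normal density `φ_k(y; μ, S)`. -/
noncomputable def mvnPdf {k : Type*} [Fintype k] [DecidableEq k]
    (μ : k → ℝ) (S : Matrix k k ℝ) (y : k → ℝ) : ℝ :=
  (2 * Real.pi) ^ (-(Fintype.card k : ℝ) / 2) * S.det ^ (-(1 : ℝ) / 2) *
    Real.exp (-((y - μ) ⬝ᵥ (S⁻¹ *ᵥ (y - μ))) / 2)

/-- Standard univariate normal cumulative distribution function `Φ`. -/
noncomputable def stdCDF (x : ℝ) : ℝ :=
  ∫ t in Set.Iic x, (Real.sqrt (2 * Real.pi))⁻¹ * Real.exp (-t ^ 2 / 2)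

/-- Inverse of the positive definite square root, `S^{-1/2}`. -/
noncomputable def invSqrt {k : Type*} [Fintype k] [DecidableEq k]
    {S : Matrix k k ℝ} (hS : S.PosDef) : Matrix k k ℝ :=
  (hS.posSemidef.1.eigenvectorUnitary.1 * diagonal ((↑) ∘ Real.sqrt ∘ hS.posSemidef.1.eigenvalues) *
    (star hS.posSemidef.1.eigenvectorUnitary : Matrix k k ℝ))⁻¹

/-- Univariate normal density `φ_1(x; m, v)` with mean `m` and variance `v`. -/
noncomputable def normalPdf (m v x : ℝ) : ℝ :=
  (Real.sqrt (2 * Real.pi * v))⁻¹ * Real.exp (-(x - m) ^ 2 / (2 * v))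

/-!
Multiplying the two Gaussian densities and completing the square in `t` factors the joint
density as `φ_q(b; cΔ, u⁻¹D) · φ_1(t; m, (u a)⁻¹)`, where `a = 1 + ΔᵀΓ⁻¹Δ` and
`m = c + ΔᵀΓ⁻¹(b - cΔ) / a`; the Sherman–Morrison formula and the matrix determinant lemma for
`D = Γ + ΔΔᵀ` identify the `b`-factor. Integrating the `t`-factor over `(c, ∞)` gives
`Φ(√(u a) (m - c))`, and since `1 - ΔᵀD⁻¹Δ = 1 / a` and `ΔᵀD⁻¹(b - cΔ) = m - c`, the argument
`√(u a) (m - c)` is `√u λᵀD^{-1/2}(b - cΔ)`.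
-/

namespace Matrix

variable {n α : Type*} [Fintype n] [Field α]

theorem vecMulVec_mulVec_eq_smul (u v w : n → α) : vecMulVec u v *ᵥ w = (v ⬝ᵥ w) • u := by
  rw [vecMulVec_mulVec, op_smul_eq_smul]

variable [DecidableEq n] {A : Matrix n n α}

theorem det_add_vecMulVec (hA : IsUnit A.det) (u v : n → α) :
    (A + vecMulVec u v).det = (1 + v ⬝ᵥ (A⁻¹ *ᵥ u)) * A.det := by
  rw [vecMulVec_eq Unit, det_add_replicateCol_mul_replicateRow hA, mul_comm, det_unique,
    Matrix.mul_assoc, ← replicateCol_mulVec, add_apply, one_apply_eq,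
    replicateRow_mul_replicateCol_apply]

theorem inv_add_vecMulVec_mulVec (hA : IsUnit A.det) {u v : n → α}
    (h : 1 + v ⬝ᵥ (A⁻¹ *ᵥ u) ≠ 0) (w : n → α) :
    (A + vecMulVec u v)⁻¹ *ᵥ w =
      A⁻¹ *ᵥ w - ((v ⬝ᵥ (A⁻¹ *ᵥ w)) / (1 + v ⬝ᵥ (A⁻¹ *ᵥ u))) • A⁻¹ *ᵥ u := by
  have hB : IsUnit (A + vecMulVec u v).det := by
    rw [det_add_vecMulVec hA]
    exact h.isUnit.mul hA
  set x := A⁻¹ *ᵥ w - ((v ⬝ᵥ (A⁻¹ *ᵥ w)) / (1 + v ⬝ᵥ (A⁻¹ *ᵥ u))) • A⁻¹ *ᵥ u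
  suffices hx : (A + vecMulVec u v) *ᵥ x = w by
    rw [← hx, mulVec_mulVec, nonsing_inv_mul _ hB, one_mulVec]
  rw [add_mulVec, vecMulVec_mulVec_eq_smul, mulVec_sub, mulVec_smul, mulVec_mulVec, mulVec_mulVec,
    mul_nonsing_inv _ hA, one_mulVec, one_mulVec, dotProduct_sub, dotProduct_smul, smul_eq_mul]
  field_simp
  rw [sub_add, ← sub_smul, add_sub_cancel_right, mul_one, sub_self, zero_smul, sub_zero]

theorem dotProduct_inv_add_vecMulVec_mulVec (hA : IsUnit A.det) {u v : n → α}
    (h : 1 + v ⬝ᵥ (A⁻¹ *ᵥ u) ≠ 0) (w : n → α) :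
    v ⬝ᵥ ((A + vecMulVec u v)⁻¹ *ᵥ w) = (v ⬝ᵥ (A⁻¹ *ᵥ w)) / (1 + v ⬝ᵥ (A⁻¹ *ᵥ u)) := by
  rw [inv_add_vecMulVec_mulVec hA h, dotProduct_sub, dotProduct_smul, smul_eq_mul]
  field_simp
  ring

theorem sq_add_dotProduct_inv_mulVec_sub_smul (hA : IsUnit A.det) (hAs : A.IsSymm) {u : n → α}
    (h : 1 + u ⬝ᵥ (A⁻¹ *ᵥ u) ≠ 0) (w : n → α) (r : α) :
    r ^ 2 + (w - r • u) ⬝ᵥ (A⁻¹ *ᵥ (w - r • u)) =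
      w ⬝ᵥ ((A + vecMulVec u u)⁻¹ *ᵥ w) + (1 + u ⬝ᵥ (A⁻¹ *ᵥ u)) *
        (r - (u ⬝ᵥ (A⁻¹ *ᵥ w)) / (1 + u ⬝ᵥ (A⁻¹ *ᵥ u))) ^ 2 := by
  have hsymm : w ⬝ᵥ (A⁻¹ *ᵥ u) = u ⬝ᵥ (A⁻¹ *ᵥ w) := by
    rw [← hAs.inv.eq, dotProduct_transpose_mulVec, hAs.inv.eq]
  rw [inv_add_vecMulVec_mulVec hA h]
  simp only [mulVec_sub, mulVec_smul, dotProduct_sub, sub_dotProduct, dotProduct_smul,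
    smul_dotProduct, smul_eq_mul, hsymm]
  field_simp
  ring

end Matrix

namespace Matrix.PosDef

open scoped MatrixOrder

variable {n : Type*} [Fintype n] [DecidableEq n] {S : Matrix n n ℝ}

theorem one_add_dotProduct_inv_mulVec_pos (hS : S.PosDef) (x : n → ℝ) :
    0 < 1 + x ⬝ᵥ (S⁻¹ *ᵥ x) := by
  have := hS.inv.posSemidef.dotProduct_mulVec_nonneg x
  rw [star_trivial] at this
  linarith

theorem invSqrt_eq_inv_sqrt (hS : S.PosDef) : invSqrt hS = (CFC.sqrt S)⁻¹ := by
  rw [invSqrt, CFC.sqrt_eq_real_sqrt S hS.posSemidef.nonneg, cfcₙ_eq_cfc, hS.posSemidef.1.cfc_eq]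
  rfl

theorem invSqrt_mulVec_dotProduct_invSqrt_mulVec (hS : S.PosDef) (x y : n → ℝ) :
    (invSqrt hS *ᵥ x) ⬝ᵥ (invSqrt hS *ᵥ y) = x ⬝ᵥ (S⁻¹ *ᵥ y) := by
  have hsymm : (CFC.sqrt S)⁻¹.IsSymm :=
    (isHermitian_iff_isSymm.mp (IsSelfAdjoint.of_nonneg (CFC.sqrt_nonneg S))).inv
  rw [invSqrt_eq_inv_sqrt, dotProduct_comm, ← dotProduct_transpose_mulVec, hsymm.eq,
    mulVec_mulVec, ← mul_inv_rev, CFC.sqrt_mul_sqrt_self S hS.posSemidef.nonneg]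

end Matrix.PosDef

theorem setIntegral_Ioi_comp_sub_right {E : Type*} [NormedAddCommGroup E] [NormedSpace ℝ E]
    (g : ℝ → E) (a d : ℝ) : ∫ x in Set.Ioi a, g (x - d) = ∫ x in Set.Ioi (a - d), g x := by
  rw [← (measurePreserving_sub_right volume d).setIntegral_preimage_emb
    (measurableEmbedding_subRight d) g (Set.Ioi (a - d)), Set.preimage_sub_const_Ioi,
    sub_add_cancel]

theorem normalPdf_eq_inv_sqrt_mul (m : ℝ) {v : ℝ} (hv : 0 < v) (x : ℝ) :
    normalPdf m v x = (√v)⁻¹ * normalPdf 0 1 ((√v)⁻¹ * (x - m)) := by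
  rw [normalPdf, normalPdf, mul_one, sub_zero, mul_pow, inv_pow, sq_sqrt hv.le,
    sqrt_mul (by positivity) v]
  field_simp

theorem normalPdf_zero_one_neg (x : ℝ) : normalPdf 0 1 (-x) = normalPdf 0 1 x := by
  simp only [normalPdf, sub_zero, neg_sq]

theorem stdCDF_eq_integral_normalPdf (x : ℝ) :
    stdCDF x = ∫ t in Set.Iic x, normalPdf 0 1 t := by
  simp [stdCDF, normalPdf]

theorem integral_Ioi_normalPdf (m c : ℝ) {v : ℝ} (hv : 0 < v) :
    ∫ t in Set.Ioi c, normalPdf m v t = stdCDF ((m - c) / √v) := by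
  have hs : 0 < (√v)⁻¹ := inv_pos.2 (sqrt_pos.2 hv)
  simp_rw [normalPdf_eq_inv_sqrt_mul m hv]
  rw [integral_const_mul, setIntegral_Ioi_comp_sub_right (fun x ↦ normalPdf 0 1 ((√v)⁻¹ * x)),
    integral_comp_mul_left_Ioi _ _ hs, smul_eq_mul, ← mul_assoc, mul_inv_cancel₀ hs.ne', one_mul,
    stdCDF_eq_integral_normalPdf, show (m - c) / √v = -((√v)⁻¹ * (c - m)) by ring,
    ← integral_comp_neg_Ioi]
  simp_rw [normalPdf_zero_one_neg]

section Multivariate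

variable {n : Type*} [Fintype n] [DecidableEq n]

theorem mvnPdf_smul (μ : n → ℝ) {S : Matrix n n ℝ} (hS : 0 < S.det) {v : ℝ} (hv : 0 < v)
    (y : n → ℝ) :
    mvnPdf μ (v • S) y = (2 * π * v) ^ (-(Fintype.card n : ℝ) / 2) * S.det ^ (-(1 : ℝ) / 2) *
      exp (-((y - μ) ⬝ᵥ (S⁻¹ *ᵥ (y - μ))) / (2 * v)) := by
  have := invertibleOfNonzero hv.ne'
  rw [mvnPdf, det_smul, inv_smul _ _ (isUnit_iff_ne_zero.2 hS.ne'), invOf_eq_inv,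
    mul_rpow (by positivity) hS.le, ← rpow_natCast, ← rpow_mul hv.le, smul_mulVec,
    dotProduct_smul, smul_eq_mul, mul_rpow (by positivity) hv.le]
  field_simp

theorem normalPdf_mul_mvnPdf_smul {Γ : Matrix n n ℝ} (hΓ : Γ.PosDef) (Δ b : n → ℝ) (c : ℝ)
    {v : ℝ} (hv : 0 < v) (t : ℝ) :
    normalPdf c v t * mvnPdf (t • Δ) (v • Γ) b =
      mvnPdf (c • Δ) (v • (Γ + vecMulVec Δ Δ)) b *
        normalPdf (c + Δ ⬝ᵥ (Γ⁻¹ *ᵥ (b - c • Δ)) / (1 + Δ ⬝ᵥ (Γ⁻¹ *ᵥ Δ)))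
          (v / (1 + Δ ⬝ᵥ (Γ⁻¹ *ᵥ Δ))) t := by
  have hΓu : IsUnit Γ.det := isUnit_iff_ne_zero.2 hΓ.det_pos.ne'
  have ha := hΓ.one_add_dotProduct_inv_mulVec_pos Δ
  have hdet : 0 < (Γ + vecMulVec Δ Δ).det := by
    rw [det_add_vecMulVec hΓu]
    exact mul_pos ha hΓ.det_pos
  have hsq := sq_add_dotProduct_inv_mulVec_sub_smul hΓu (isHermitian_iff_isSymm.mp hΓ.1) ha.ne'
    (b - c • Δ) (t - c)
  rw [show b - c • Δ - (t - c) • Δ = b - t • Δ by module] at hsq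
  rw [mvnPdf_smul _ hΓ.det_pos hv, mvnPdf_smul _ hdet hv, det_add_vecMulVec hΓu, normalPdf,
    normalPdf]
  set a := 1 + Δ ⬝ᵥ (Γ⁻¹ *ᵥ Δ)
  clear_value a
  have hconst : (a * Γ.det) ^ (-(1 : ℝ) / 2) * (√(2 * π * (v / a)))⁻¹ =
      Γ.det ^ (-(1 : ℝ) / 2) * (√(2 * π * v))⁻¹ := by
    rw [mul_rpow ha.le hΓ.det_pos.le, mul_div_assoc', sqrt_div' _ ha.le, inv_div, neg_div,
      rpow_neg ha.le, ← sqrt_eq_rpow]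
    field_simp
  have hexp : exp (-(t - c) ^ 2 / (2 * v)) *
        exp (-((b - t • Δ) ⬝ᵥ (Γ⁻¹ *ᵥ (b - t • Δ))) / (2 * v)) =
      exp (-((b - c • Δ) ⬝ᵥ ((Γ + vecMulVec Δ Δ)⁻¹ *ᵥ (b - c • Δ))) / (2 * v)) *
        exp (-(t - (c + Δ ⬝ᵥ (Γ⁻¹ *ᵥ (b - c • Δ)) / a)) ^ 2 / (2 * (v / a))) := by
    rw [← exp_add, ← exp_add]
    congr 1
    field_simp
    field_simp at hsq
    linear_combination -hsq
  calc _ = (2 * π * v) ^ (-(Fintype.card n : ℝ) / 2) *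
        (Γ.det ^ (-(1 : ℝ) / 2) * (√(2 * π * v))⁻¹) *
        (exp (-(t - c) ^ 2 / (2 * v)) *
          exp (-((b - t • Δ) ⬝ᵥ (Γ⁻¹ *ᵥ (b - t • Δ))) / (2 * v))) := by ring
    _ = _ := by rw [← hconst, hexp]; ring

end Multivariate

/-- truncated-normal augmentation: if `T | U=u ~ N(c, u⁻¹)` truncated to
`(c, ∞)` and `b | T=t, U=u ~ N_q(Δt, u⁻¹Γ)`, then `b | U=u ~ SN_q(cΔ, u⁻¹D, λ)` with
`D = Γ + ΔΔᵀ` and `λ = D^{-1/2}Δ/√(1 − ΔᵀD⁻¹Δ)`. -/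
theorem truncated_normal_augmentation
    {q : ℕ} (Γ : Matrix (Fin q) (Fin q) ℝ) (hΓ : Γ.PosDef)
    (Δ : Fin q → ℝ) (c u : ℝ) (hu : 0 < u)
    (D : Matrix (Fin q) (Fin q) ℝ) (hDdef : D = Γ + Matrix.vecMulVec Δ Δ) (hD : D.PosDef)
    (lam : Fin q → ℝ)
    (hlam : lam = (Real.sqrt (1 - Δ ⬝ᵥ (D⁻¹ *ᵥ Δ)))⁻¹ • (invSqrt hD *ᵥ Δ)) :
    ∀ b : Fin q → ℝ,
      (∫ t in Set.Ioi c, 2 * normalPdf c u⁻¹ t * mvnPdf (t • Δ) (u⁻¹ • Γ) b) =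
        2 * mvnPdf (c • Δ) (u⁻¹ • D) b *
          stdCDF (Real.sqrt u * (lam ⬝ᵥ (invSqrt hD *ᵥ (b - c • Δ)))) := by
  intro b
  have hΓu : IsUnit Γ.det := isUnit_iff_ne_zero.2 hΓ.det_pos.ne'
  have ha := hΓ.one_add_dotProduct_inv_mulVec_pos Δ
  have hv : 0 < u⁻¹ := inv_pos.2 hu
  have hmean (w : Fin q → ℝ) :
      Δ ⬝ᵥ (D⁻¹ *ᵥ w) = Δ ⬝ᵥ (Γ⁻¹ *ᵥ w) / (1 + Δ ⬝ᵥ (Γ⁻¹ *ᵥ Δ)) := by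
    rw [hDdef, dotProduct_inv_add_vecMulVec_mulVec hΓu ha.ne']
  have harg : (Δ ⬝ᵥ (Γ⁻¹ *ᵥ (b - c • Δ)) / (1 + Δ ⬝ᵥ (Γ⁻¹ *ᵥ Δ))) /
      √(u⁻¹ / (1 + Δ ⬝ᵥ (Γ⁻¹ *ᵥ Δ))) = √u * (lam ⬝ᵥ (invSqrt hD *ᵥ (b - c • Δ))) := by
    rw [hlam, smul_dotProduct, hD.invSqrt_mulVec_dotProduct_invSqrt_mulVec, hmean, hmean,
      smul_eq_mul, one_sub_div ha.ne', add_sub_cancel_right, one_div, sqrt_inv, inv_inv,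
      sqrt_div' _ ha.le, sqrt_inv]
    field_simp
  simp_rw [mul_assoc (2 : ℝ), normalPdf_mul_mvnPdf_smul hΓ Δ b c hv, ← hDdef, integral_const_mul,
    integral_Ioi_normalPdf _ _ (div_pos hv ha), add_sub_cancel_left, harg]
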